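/- arXiv:math/0506562 — 3 statements merged into one kernel-verified Lean document; each statement's English description precedes it below -/
import Mathlib

section
/- Let α ∈ ℝ, let u : ℝ → ℝ be infinitely differentiable, and fix x ∈ ℝ. For h ≠ 0 define the O(γ³,α²) holistic (5-point) discretisation applied to the smooth field u at x: F(h) := −(α/h²)(δ²u)(x) − (α/h)·u(x)·(δμu)(x) − (4/h⁴)(δ⁴u)(x) + (α/(12h²))(δ⁴u)(x) + (α/(12h))·( 2u(x)(δ³μu)(x) + (δ²u)(x)(δ³μu)(x) + (δ⁴u)(x)(δμu)(x) ), where all difference operators use step h. Then, as h → 0, F(h) = −α( u(x)u′(x) + u″(x) ) − 4u⁗(x) − (2h²/3)·u⁽⁶⁾(x) + O(h⁴); that is, the equivalent PDE of the 5-point holistic discretisation agrees with the Kuramoto–Sivashinsky equation with leading error −(2h²/3)u_xxxxxx, and in particular the nonlinear terms are approximated to fourth order in h. -/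
open Filter Topology Asymptotics

/-- Centered difference operator of step `h`: `(δf)(x) = f(x + h/2) - f(x - h/2)`. -/
noncomputable def cdel (h : ℝ) (f : ℝ → ℝ) : ℝ → ℝ := fun x => f (x + h / 2) - f (x - h / 2)

/-- Centered mean operator of step `h`: `(μf)(x) = (f(x + h/2) + f(x - h/2))/2`. -/
noncomputable def cmu (h : ℝ) (f : ℝ → ℝ) : ℝ → ℝ := fun x => (f (x + h / 2) + f (x - h / 2)) / 2

private lemma isBigO_of_deriv {g : ℝ → ℝ} (hg : Differentiable ℝ g) (h0 : g 0 = 0)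
    {k : ℕ} (hO : (deriv g) =O[𝓝 (0:ℝ)] fun h => h ^ k) :
    g =O[𝓝 (0:ℝ)] fun h => h ^ (k+1) := by
  obtain ⟨C, hC0, hC⟩ := hO.exists_nonneg
  rw [IsBigOWith, Metric.eventually_nhds_iff] at hC
  obtain ⟨ε, hε, hball⟩ := hC
  rw [isBigO_iff]
  refine ⟨C, Metric.eventually_nhds_iff.2 ⟨ε, hε, fun {h} hh => ?_⟩⟩
  have habs : ∀ t ∈ Set.uIcc (0:ℝ) h, |t| ≤ |h| := by
    intro t ht
    rcases Set.mem_uIcc.mp ht with ⟨h1, h2⟩ | ⟨h1, h2⟩ <;>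
      rcases abs_cases t with ⟨e1, _⟩ | ⟨e1, _⟩ <;>
      rcases abs_cases h with ⟨e2, _⟩ | ⟨e2, _⟩ <;> linarith
  have key : ‖g h - g 0‖ ≤ (C * |h| ^ k) * ‖h - 0‖ := by
    refine Convex.norm_image_sub_le_of_norm_deriv_le (fun t _ => hg.differentiableAt)
      (fun t ht => ?_) (convex_uIcc 0 h) (Set.left_mem_uIcc) (Set.right_mem_uIcc)
    have h1 : dist t 0 < ε := by
      rw [Real.dist_eq, sub_zero]
      exact lt_of_le_of_lt (habs t ht) (by simpa [Real.dist_eq] using hh)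
    calc ‖deriv g t‖ ≤ C * ‖t ^ k‖ := hball h1
      _ ≤ C * |h| ^ k := by
          rw [Real.norm_eq_abs, abs_pow]
          exact mul_le_mul_of_nonneg_left (pow_le_pow_left₀ (abs_nonneg t) (habs t ht) k) hC0
  rw [h0, sub_zero, sub_zero] at key
  calc ‖g h‖ ≤ (C * |h| ^ k) * ‖h‖ := key
    _ = C * ‖h ^ (k+1)‖ := by
        rw [Real.norm_eq_abs, Real.norm_eq_abs, abs_pow, pow_succ]; ring

private lemma taylor_bigO : ∀ (n : ℕ) (v : ℝ → ℝ), ContDiff ℝ (⊤ : ℕ∞) v →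
    (fun h : ℝ => v h - ∑ i ∈ Finset.range (n+1), iteratedDeriv i v 0 * h ^ i / i.factorial)
      =O[𝓝 (0:ℝ)] fun h => h ^ (n+1) := by
  intro n
  induction n with
  | zero =>
    intro v hv
    have := ((hv.differentiable (by simp)) 0).hasDerivAt.isBigO_sub
    simpa using this
  | succ n ih =>
    intro v hv
    have hv' : ContDiff ℝ (⊤ : ℕ∞) (deriv v) := (contDiff_infty_iff_deriv.mp hv).2
    have hpolyd : ∀ i : ℕ,
        Differentiable ℝ (fun h : ℝ => iteratedDeriv i v 0 * h ^ i / (i.factorial : ℝ)) :=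
      fun i => ((differentiable_pow i).const_mul _).div_const _
    have hgdiff : Differentiable ℝ (fun h : ℝ =>
        v h - ∑ i ∈ Finset.range (n+2), iteratedDeriv i v 0 * h ^ i / i.factorial) := by
      refine (hv.differentiable (by simp)).sub ?_
      exact Differentiable.fun_sum (fun i _ => hpolyd i)
    have h0 : (fun h : ℝ =>
        v h - ∑ i ∈ Finset.range (n+2), iteratedDeriv i v 0 * h ^ i / i.factorial) 0 = 0 := by
      simp [Finset.sum_range_succ']
    have hder : deriv (fun h : ℝ =>
        v h - ∑ i ∈ Finset.range (n+2), iteratedDeriv i v 0 * h ^ i / i.factorial)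
        = fun t => deriv v t - ∑ j ∈ Finset.range (n+1),
            iteratedDeriv j (deriv v) 0 * t ^ j / j.factorial := by
      funext t
      rw [deriv_fun_sub ((hv.differentiable (by simp)).differentiableAt)
        ((Differentiable.fun_sum (fun i _ => hpolyd i)).differentiableAt)]
      congr 1
      rw [deriv_fun_sum (fun i _ => (hpolyd i).differentiableAt)]
      have hterm : ∀ i : ℕ, deriv (fun h : ℝ => iteratedDeriv i v 0 * h ^ i / (i.factorial : ℝ)) t
          = iteratedDeriv i v 0 * (i * t ^ (i-1)) / (i.factorial : ℝ) := by
        intro i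
        rw [show (fun h : ℝ => iteratedDeriv i v 0 * h ^ i / (i.factorial : ℝ))
            = fun h : ℝ => (iteratedDeriv i v 0 / (i.factorial : ℝ)) * h ^ i from by
              funext h; ring]
        rw [deriv_const_mul _ (differentiable_pow i).differentiableAt, deriv_pow_field]
        ring
      simp only [hterm]
      rw [Finset.sum_range_succ']
      simp only [Nat.cast_zero, zero_mul, mul_zero, zero_div, add_zero]
      refine Finset.sum_congr rfl (fun j _ => ?_)
      rw [iteratedDeriv_succ', Nat.factorial_succ]
      have h1 : ((j+1).factorial : ℝ) ≠ 0 := Nat.cast_ne_zero.mpr (Nat.factorial_ne_zero _)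
      have hjf : (j.factorial : ℝ) ≠ 0 := Nat.cast_ne_zero.mpr (Nat.factorial_ne_zero _)
      push_cast
      field_simp
    exact isBigO_of_deriv hgdiff h0 (by rw [hder]; exact ih (deriv v) hv')

private lemma taylor_shift (u : ℝ → ℝ) (hu : ContDiff ℝ (⊤ : ℕ∞) u) (x c : ℝ) (n : ℕ) :
    (fun h : ℝ => u (x + c * h)
        - ∑ i ∈ Finset.range (n+1), iteratedDeriv i u x * (c*h) ^ i / i.factorial)
      =O[𝓝 (0:ℝ)] fun h : ℝ => h ^ (n+1) := by
  have hv : ContDiff ℝ (⊤ : ℕ∞) (fun t => u (x + t)) := hu.comp (contDiff_const.add contDiff_id)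
  have hT := taylor_bigO n _ hv
  have hid : ∀ i, iteratedDeriv i (fun t => u (x + t)) 0 = iteratedDeriv i u x := by
    intro i; rw [iteratedDeriv_comp_const_add]; simp
  simp only [hid] at hT
  have htend : Tendsto (fun h : ℝ => c * h) (𝓝 0) (𝓝 0) := by
    simpa using (continuous_mul_left c).tendsto (0:ℝ)
  have hcomp := hT.comp_tendsto htend
  simp only [Function.comp_def] at hcomp
  refine hcomp.trans ?_
  rw [show (fun h : ℝ => (c * h) ^ (n+1)) = fun h : ℝ => c ^ (n+1) * h ^ (n+1) from by
    funext h; rw [mul_pow]]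
  exact isBigO_const_mul_self _ _ _

private lemma hpow_bigO {m k : ℕ} (hmk : m ≤ k) :
    (fun h : ℝ => h ^ k) =O[𝓝[≠] (0:ℝ)] fun h : ℝ => h ^ m := by
  rw [isBigO_iff]
  refine ⟨1, ?_⟩
  have : ∀ᶠ h : ℝ in 𝓝[≠] (0:ℝ), |h| ≤ 1 := by
    refine eventually_nhdsWithin_of_eventually_nhds ?_
    filter_upwards [Metric.ball_mem_nhds (0:ℝ) one_pos] with h hh
    simp only [Metric.mem_ball, Real.dist_eq, sub_zero] at hh
    exact le_of_lt hh
  filter_upwards [this] with h hh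
  rw [one_mul, Real.norm_eq_abs, Real.norm_eq_abs, abs_pow, abs_pow]
  exact pow_le_pow_of_le_one (abs_nonneg h) hh hmk

private lemma mono_bigO {c r : ℝ} {m k : ℕ} (hmk : m ≤ k) :
    (fun h : ℝ => c * h ^ k / r) =O[𝓝[≠] (0:ℝ)] fun h : ℝ => h ^ m := by
  rw [show (fun h : ℝ => c * h ^ k / r) = fun h : ℝ => (c / r) * h ^ k from by funext h; ring]
  exact (isBigO_const_mul_self _ _ _).trans (hpow_bigO hmk)

private lemma div_bigO {f : ℝ → ℝ} {m k : ℕ} (hf : f =O[𝓝[≠] (0:ℝ)] fun h : ℝ => h ^ (m + k)) :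
    (fun h : ℝ => f h / h ^ k) =O[𝓝[≠] (0:ℝ)] fun h : ℝ => h ^ m := by
  have h1 := hf.mul (isBigO_refl (fun h : ℝ => (h ^ k)⁻¹) (𝓝[≠] (0:ℝ)))
  refine (IsBigO.congr' h1 ?_ ?_ : _)
  · filter_upwards with h; rw [div_eq_mul_inv]
  · filter_upwards [self_mem_nhdsWithin] with h (hh : h ≠ 0)
    rw [pow_add]
    field_simp

/-- Degree-7 Taylor polynomial of `u` at `x`, evaluated at increment `t`. -/
noncomputable def tpoly (u : ℝ → ℝ) (x t : ℝ) : ℝ :=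
  u x + deriv u x * t + iteratedDeriv 2 u x * t^2/2 + iteratedDeriv 3 u x * t^3/6
  + iteratedDeriv 4 u x * t^4/24 + iteratedDeriv 5 u x * t^5/120
  + iteratedDeriv 6 u x * t^6/720 + iteratedDeriv 7 u x * t^7/5040

private lemma sum8 (u : ℝ → ℝ) (x t : ℝ) :
    ∑ i ∈ Finset.range 8, iteratedDeriv i u x * t ^ i / i.factorial = tpoly u x t := by
  simp [Finset.sum_range_succ, tpoly, Nat.factorial, iteratedDeriv_one]
  try ring

private lemma hRgen (u : ℝ → ℝ) (hu : ContDiff ℝ (⊤ : ℕ∞) u) (x c : ℝ) :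
    (fun h : ℝ => u (x + c * h) - tpoly u x (c * h)) =O[𝓝[≠] (0:ℝ)] fun h : ℝ => h ^ 8 := by
  have := (taylor_shift u hu x c 7).mono (nhdsWithin_le_nhds : 𝓝[≠] (0:ℝ) ≤ 𝓝 0)
  simpa only [show (7:ℕ)+1 = 8 from rfl, sum8] using this

/-- Second-difference stencil value. -/
noncomputable def S2f (u : ℝ → ℝ) (x : ℝ) : ℝ → ℝ := fun h => u (x+h) - 2*u x + u (x-h)
/-- First centered-difference stencil value. -/
noncomputable def Smf (u : ℝ → ℝ) (x : ℝ) : ℝ → ℝ := fun h => (u (x+h) - u (x-h))/2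
/-- Fourth-difference stencil value. -/
noncomputable def S4f (u : ℝ → ℝ) (x : ℝ) : ℝ → ℝ :=
  fun h => u (x+2*h) - 4*u (x+h) + 6*u x - 4*u (x-h) + u (x-2*h)
/-- Third-difference-mean stencil value. -/
noncomputable def S3mf (u : ℝ → ℝ) (x : ℝ) : ℝ → ℝ :=
  fun h => (u (x+2*h) - 2*u (x+h) + 2*u (x-h) - u (x-2*h))/2

/-- The equivalent PDE of the O(γ³,α²) holistic (5-point) discretisation: it agrees
with the Kuramoto–Sivashinsky equation with leading error `-(2h²/3) u_xxxxxx`, the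
nonlinear terms being approximated to fourth order in `h`. -/
theorem holistic_5pt_equivalent_pde (α : ℝ) (u : ℝ → ℝ) (hu : ContDiff ℝ (⊤ : ℕ∞) u) (x : ℝ) :
    (fun h : ℝ =>
      (-(α / h ^ 2) * cdel h (cdel h u) x
        - (α / h) * u x * cdel h (cmu h u) x
        - (4 / h ^ 4) * cdel h (cdel h (cdel h (cdel h u))) x
        + (α / (12 * h ^ 2)) * cdel h (cdel h (cdel h (cdel h u))) x
        + (α / (12 * h)) *
            (2 * u x * cdel h (cdel h (cdel h (cmu h u))) x
              + cdel h (cdel h u) x * cdel h (cdel h (cdel h (cmu h u))) x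
              + cdel h (cdel h (cdel h (cdel h u))) x * cdel h (cmu h u) x))
      - (-(α * (u x * deriv u x + iteratedDeriv 2 u x)) - 4 * iteratedDeriv 4 u x
          - (2 * h ^ 2 / 3) * iteratedDeriv 6 u x))
    =O[𝓝[≠] (0 : ℝ)] fun h => h ^ 4 := by
  have hu' : ContDiff ℝ (⊤ : ℕ∞) u := hu.of_le (by simp)
  have hR1 : (fun h : ℝ => u (x + h) - tpoly u x h) =O[𝓝[≠] (0:ℝ)] fun h : ℝ => h ^ 8 := by
    simpa using hRgen u hu' x 1
  have hRm1 : (fun h : ℝ => u (x - h) - tpoly u x (-h)) =O[𝓝[≠] (0:ℝ)] fun h : ℝ => h ^ 8 := by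
    simpa [neg_one_mul, ← sub_eq_add_neg] using hRgen u hu' x (-1)
  have hR2 : (fun h : ℝ => u (x + 2*h) - tpoly u x (2*h)) =O[𝓝[≠] (0:ℝ)] fun h : ℝ => h ^ 8 :=
    hRgen u hu' x 2
  have hRm2 : (fun h : ℝ => u (x - 2*h) - tpoly u x (-(2*h))) =O[𝓝[≠] (0:ℝ)] fun h : ℝ => h ^ 8 := by
    simpa [neg_mul, ← sub_eq_add_neg] using hRgen u hu' x (-2)
  have hE2 : (fun h : ℝ => S2f u x h
      - (iteratedDeriv 2 u x * h^2 + iteratedDeriv 4 u x * h^4/12)) =O[𝓝[≠] (0:ℝ)]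
      fun h : ℝ => h ^ 6 := by
    have heq : (fun h : ℝ => S2f u x h
        - (iteratedDeriv 2 u x * h^2 + iteratedDeriv 4 u x * h^4/12))
        = fun h : ℝ => ((u (x+h) - tpoly u x h) + (u (x-h) - tpoly u x (-h)))
            + iteratedDeriv 6 u x * h^6/360 := by
      funext h; simp only [S2f, tpoly]; ring
    rw [heq]
    exact ((hR1.add hRm1).trans (hpow_bigO (by norm_num))).add (mono_bigO le_rfl)
  have hEm : (fun h : ℝ => Smf u x h
      - (deriv u x * h + iteratedDeriv 3 u x * h^3/6)) =O[𝓝[≠] (0:ℝ)] fun h : ℝ => h ^ 5 := by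
    have heq : (fun h : ℝ => Smf u x h - (deriv u x * h + iteratedDeriv 3 u x * h^3/6))
        = fun h : ℝ => (1/2) * ((u (x+h) - tpoly u x h) - (u (x-h) - tpoly u x (-h)))
            + iteratedDeriv 5 u x * h^5/120 + iteratedDeriv 7 u x * h^7/5040 := by
      funext h; simp only [Smf, tpoly]; ring
    rw [heq]
    exact ((((hR1.sub hRm1).const_mul_left (1/2)).trans (hpow_bigO (by norm_num))).add
      (mono_bigO le_rfl)).add (mono_bigO (by norm_num))
  have hE4 : (fun h : ℝ => S4f u x h
      - (iteratedDeriv 4 u x * h^4 + iteratedDeriv 6 u x * h^6/6)) =O[𝓝[≠] (0:ℝ)]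
      fun h : ℝ => h ^ 8 := by
    have heq : (fun h : ℝ => S4f u x h
        - (iteratedDeriv 4 u x * h^4 + iteratedDeriv 6 u x * h^6/6))
        = fun h : ℝ => ((u (x+2*h) - tpoly u x (2*h)) + (u (x-2*h) - tpoly u x (-(2*h))))
            - 4 * ((u (x+h) - tpoly u x h) + (u (x-h) - tpoly u x (-h))) := by
      funext h; simp only [S4f, tpoly]; ring
    rw [heq]
    exact (hR2.add hRm2).sub ((hR1.add hRm1).const_mul_left 4)
  have hE3m : (fun h : ℝ => S3mf u x h - iteratedDeriv 3 u x * h^3) =O[𝓝[≠] (0:ℝ)]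
      fun h : ℝ => h ^ 5 := by
    have heq : (fun h : ℝ => S3mf u x h - iteratedDeriv 3 u x * h^3)
        = fun h : ℝ => (1/2) * (((u (x+2*h) - tpoly u x (2*h)) - (u (x-2*h) - tpoly u x (-(2*h))))
            - 2 * ((u (x+h) - tpoly u x h) - (u (x-h) - tpoly u x (-h))))
            + iteratedDeriv 5 u x * h^5/4 + iteratedDeriv 7 u x * h^7/40 := by
      funext h; simp only [S3mf, tpoly]; ring
    rw [heq]
    exact (((((hR2.sub hRm2).sub ((hR1.sub hRm1).const_mul_left 2)).const_mul_left (1/2)).trans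
      (hpow_bigO (by norm_num))).add (mono_bigO le_rfl)).add (mono_bigO (by norm_num))
  have hE4' : (fun h : ℝ => S4f u x h - iteratedDeriv 4 u x * h^4) =O[𝓝[≠] (0:ℝ)]
      fun h : ℝ => h ^ 6 := by
    have heq : (fun h : ℝ => S4f u x h - iteratedDeriv 4 u x * h^4)
        = fun h : ℝ => (S4f u x h
            - (iteratedDeriv 4 u x * h^4 + iteratedDeriv 6 u x * h^6/6))
            + iteratedDeriv 6 u x * h^6/6 := by
      funext h; ring
    rw [heq]
    exact (hE4.trans (hpow_bigO (by norm_num))).add (mono_bigO le_rfl)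
  have hB2 : (fun h : ℝ => S2f u x h) =O[𝓝[≠] (0:ℝ)] fun h : ℝ => h ^ 2 := by
    have heq : (fun h : ℝ => S2f u x h)
        = fun h : ℝ => (S2f u x h - (iteratedDeriv 2 u x * h^2 + iteratedDeriv 4 u x * h^4/12))
            + iteratedDeriv 2 u x * h^2/1 + iteratedDeriv 4 u x * h^4/12 := by
      funext h; ring
    rw [heq]
    exact ((hE2.trans (hpow_bigO (by norm_num))).add (mono_bigO le_rfl)).add
      (mono_bigO (by norm_num))
  have hBm : (fun h : ℝ => Smf u x h) =O[𝓝[≠] (0:ℝ)] fun h : ℝ => h ^ 1 := by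
    have heq : (fun h : ℝ => Smf u x h)
        = fun h : ℝ => (Smf u x h - (deriv u x * h + iteratedDeriv 3 u x * h^3/6))
            + deriv u x * h^1/1 + iteratedDeriv 3 u x * h^3/6 := by
      funext h; ring
    rw [heq]
    exact ((hEm.trans (hpow_bigO (by norm_num))).add (mono_bigO le_rfl)).add
      (mono_bigO (by norm_num))
  have hB4 : (fun h : ℝ => S4f u x h) =O[𝓝[≠] (0:ℝ)] fun h : ℝ => h ^ 4 := by
    have heq : (fun h : ℝ => S4f u x h)
        = fun h : ℝ => (S4f u x h - (iteratedDeriv 4 u x * h^4 + iteratedDeriv 6 u x * h^6/6))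
            + iteratedDeriv 4 u x * h^4/1 + iteratedDeriv 6 u x * h^6/6 := by
      funext h; ring
    rw [heq]
    exact ((hE4.trans (hpow_bigO (by norm_num))).add (mono_bigO le_rfl)).add
      (mono_bigO (by norm_num))
  have hB3m : (fun h : ℝ => S3mf u x h) =O[𝓝[≠] (0:ℝ)] fun h : ℝ => h ^ 3 := by
    have heq : (fun h : ℝ => S3mf u x h)
        = fun h : ℝ => (S3mf u x h - iteratedDeriv 3 u x * h^3)
            + iteratedDeriv 3 u x * h^3/1 := by
      funext h; ring
    rw [heq]
    exact (hE3m.trans (hpow_bigO (by norm_num))).add (mono_bigO le_rfl)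
  have hprod1 : (fun h : ℝ => S2f u x h * S3mf u x h) =O[𝓝[≠] (0:ℝ)]
      fun h : ℝ => h ^ (4+1) := by
    have := hB2.mul hB3m
    have e : (fun h : ℝ => h^2 * h^3) = fun h : ℝ => h^(4+1) := by funext h; ring
    rwa [e] at this
  have hprod2 : (fun h : ℝ => S4f u x h * Smf u x h) =O[𝓝[≠] (0:ℝ)]
      fun h : ℝ => h ^ (4+1) := by
    have := hB4.mul hBm
    have e : (fun h : ℝ => h^4 * h^1) = fun h : ℝ => h^(4+1) := by funext h; ring
    rwa [e] at this
  have hTa : (fun h : ℝ => -α * ((S2f u x h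
      - (iteratedDeriv 2 u x * h^2 + iteratedDeriv 4 u x * h^4/12)) / h^2))
      =O[𝓝[≠] (0:ℝ)] fun h : ℝ => h ^ 4 :=
    (div_bigO (m := 4) (k := 2) hE2).const_mul_left (-α)
  have hTb : (fun h : ℝ => (-α * u x) * ((Smf u x h
      - (deriv u x * h + iteratedDeriv 3 u x * h^3/6)) / h^1))
      =O[𝓝[≠] (0:ℝ)] fun h : ℝ => h ^ 4 :=
    (div_bigO (m := 4) (k := 1) hEm).const_mul_left (-α * u x)
  have hTc : (fun h : ℝ => (-4 : ℝ) * ((S4f u x h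
      - (iteratedDeriv 4 u x * h^4 + iteratedDeriv 6 u x * h^6/6)) / h^4))
      =O[𝓝[≠] (0:ℝ)] fun h : ℝ => h ^ 4 :=
    (div_bigO (m := 4) (k := 4) hE4).const_mul_left (-4)
  have hTd : (fun h : ℝ => (α/12) * ((S4f u x h - iteratedDeriv 4 u x * h^4) / h^2))
      =O[𝓝[≠] (0:ℝ)] fun h : ℝ => h ^ 4 :=
    (div_bigO (m := 4) (k := 2) hE4').const_mul_left (α/12)
  have hTe : (fun h : ℝ => (α/6 * u x) * ((S3mf u x h - iteratedDeriv 3 u x * h^3) / h^1))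
      =O[𝓝[≠] (0:ℝ)] fun h : ℝ => h ^ 4 :=
    (div_bigO (m := 4) (k := 1) hE3m).const_mul_left (α/6 * u x)
  have hTf : (fun h : ℝ => (α/12) * ((S2f u x h * S3mf u x h) / h^1))
      =O[𝓝[≠] (0:ℝ)] fun h : ℝ => h ^ 4 :=
    (div_bigO (m := 4) (k := 1) hprod1).const_mul_left (α/12)
  have hTg : (fun h : ℝ => (α/12) * ((S4f u x h * Smf u x h) / h^1))
      =O[𝓝[≠] (0:ℝ)] fun h : ℝ => h ^ 4 :=
    (div_bigO (m := 4) (k := 1) hprod2).const_mul_left (α/12)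
  have hsum := (((((hTa.add hTb).add hTc).add hTd).add hTe).add hTf).add hTg
  have hs2 : ∀ h : ℝ, cdel h (cdel h u) x = u (x+h) - 2*u x + u (x-h) := fun h => by
    simp only [cdel]; ring_nf
  have hsm : ∀ h : ℝ, cdel h (cmu h u) x = (u (x+h) - u (x-h))/2 := fun h => by
    simp only [cdel, cmu]; ring_nf
  have hs4 : ∀ h : ℝ, cdel h (cdel h (cdel h (cdel h u))) x
      = u (x+2*h) - 4*u (x+h) + 6*u x - 4*u (x-h) + u (x-2*h) := fun h => by
    simp only [cdel]; ring_nf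
  have hs3m : ∀ h : ℝ, cdel h (cdel h (cdel h (cmu h u))) x
      = (u (x+2*h) - 2*u (x+h) + 2*u (x-h) - u (x-2*h))/2 := fun h => by
    simp only [cdel, cmu]; ring_nf
  refine hsum.congr' ?_ EventuallyEq.rfl
  filter_upwards [self_mem_nhdsWithin] with h (hh : h ≠ 0)
  simp only [S2f, Smf, S4f, S3mf, hs2 h, hsm h, hs4 h, hs3m h]
  field_simp
  ring
end

section
/- Let α ∈ ℝ, let u : ℝ → ℝ be infinitely differentiable, and fix x ∈ ℝ. For h ≠ 0 define the O(γ⁴,α²) holistic (7-point) discretisation applied to u at x: F(h) := −(α/h²)(δ²u)(x) − (α/h)·u(x)·(δμu)(x) − (4/h⁴)(δ⁴u)(x) + (α/(12h²))(δ⁴u)(x) + (2/(3h⁴))(δ⁶u)(x) − (α/(90h²))(δ⁶u)(x) + (α/(12h))·( 2u(x)(δ³μu)(x) + (δ²u)(x)(δ³μu)(x) + (δ⁴u)(x)(δμu)(x) ) − (α/(480h))·( 16u(x)(δ⁵μu)(x) + 30(δ⁴u)(x)(δ³μu)(x) + 40(δ²u)(x)(δ³μu)(x) + 40(δ⁴u)(x)(δμu)(x)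 + 28(δ²u)(x)(δ⁵μu)(x) + 14(δ⁶u)(x)(δμu)(x) + 7(δ⁴u)(x)(δ⁵μu)(x) + 7(δ⁶u)(x)(δ³μu)(x) ), with all difference operators of step h. Then, as h → 0, F(h) = −α( u(x)u′(x) + u″(x) ) − 4u⁗(x) + O(h⁴); that is, the 7-point holistic discretisation is fourth-order consistent with the Kuramoto–Sivashinsky equation, including its nonlinear terms. -/
open Filter Topology Asymptotics

/-- MVT step: if `R 0 = 0`, `R` differentiable, `deriv R =O h^m`, then `R =O h^(m+1)`. -/
lemma isBigO_succ_of_deriv {R : ℝ → ℝ} (hR : Differentiable ℝ R) (h0 : R 0 = 0) {m : ℕ}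
    (hd : deriv R =O[𝓝 (0:ℝ)] fun h => h ^ m) :
    R =O[𝓝 (0:ℝ)] fun h => h ^ (m+1) := by
  rw [isBigO_iff] at hd ⊢
  obtain ⟨C, hC⟩ := hd
  obtain ⟨ε, hε, hball⟩ := Metric.eventually_nhds_iff.1 hC
  refine ⟨|C|, Metric.eventually_nhds_iff.2 ⟨ε, hε, fun h hh => ?_⟩⟩
  simp only [Real.dist_eq, sub_zero] at hh
  have key : ‖R h - R 0‖ ≤ (|C| * |h| ^ m) * ‖h - 0‖ := by
    apply Convex.norm_image_sub_le_of_norm_deriv_le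
      (fun t _ => hR.differentiableAt) ?_ (convex_uIcc (0:ℝ) h)
      (Set.left_mem_uIcc) (Set.right_mem_uIcc)
    intro t ht
    have htabs : |t| ≤ |h| := by
      rcases Set.mem_uIcc.1 ht with ⟨h1, h2⟩ | ⟨h1, h2⟩ <;> rw [abs_le] <;>
        constructor <;> linarith [le_abs_self h, neg_abs_le h]
    have hdist : dist t 0 < ε := by simpa [Real.dist_eq] using lt_of_le_of_lt htabs hh
    calc ‖deriv R t‖ ≤ C * ‖t ^ m‖ := hball hdist
      _ ≤ |C| * |t| ^ m := by
          rw [Real.norm_eq_abs, abs_pow]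
          exact mul_le_mul_of_nonneg_right (le_abs_self C) (pow_nonneg (abs_nonneg t) m)
      _ ≤ |C| * |h| ^ m :=
          mul_le_mul_of_nonneg_left (pow_le_pow_left₀ (abs_nonneg t) htabs m) (abs_nonneg C)
  rw [h0, sub_zero, sub_zero] at key
  calc ‖R h‖ ≤ |C| * |h| ^ m * ‖h‖ := key
    _ = |C| * ‖h ^ (m+1)‖ := by
        rw [Real.norm_eq_abs, Real.norm_eq_abs, abs_pow, pow_succ]; ring

/-- Taylor remainder bound: for smooth `f`, the degree-`n` Taylor expansion of
`h ↦ f (x + c*h)` at `0` has remainder `O(h^(n+1))`. -/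
lemma taylor_remainder_isBigO (n : ℕ) :
    ∀ (f : ℝ → ℝ), ContDiff ℝ ((⊤ : ℕ∞) : WithTop ℕ∞) f → ∀ (x c : ℝ),
    (fun h : ℝ => f (x + c*h) - ∑ i ∈ Finset.range (n+1),
        iteratedDeriv i f x * (c*h)^i / (i.factorial : ℝ)) =O[𝓝 (0:ℝ)] fun h => h ^ (n+1) := by
  induction n with
  | zero =>
    intro f hf x c
    have hfd := (contDiff_infty_iff_deriv.mp hf).1
    have hd : HasDerivAt (fun h : ℝ => f (x + c*h)) (c * deriv f (x + c*0)) 0 := by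
      have h1 : HasDerivAt (fun h : ℝ => x + c*h) c 0 := by
        simpa using ((hasDerivAt_id (0:ℝ)).const_mul c).const_add x
      have h2 := (hfd (x + c*0)).hasDerivAt
      simpa [mul_comm, Function.comp_def] using h2.comp 0 h1
    have := hd.isBigO_sub
    simp only [mul_zero, add_zero, sub_zero] at this ⊢
    simpa [Finset.sum_range_one] using this
  | succ n ih =>
    intro f hf x c
    set R : ℝ → ℝ := fun h : ℝ => f (x + c*h) - ∑ i ∈ Finset.range (n+2),
        iteratedDeriv i f x * (c*h)^i / (i.factorial : ℝ) with hRdef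
    have hfd : Differentiable ℝ f := (contDiff_infty_iff_deriv.mp hf).1
    have hRdiff : Differentiable ℝ R := by
      apply Differentiable.sub
      · exact hfd.comp ((differentiable_const _).add (differentiable_id.const_mul c))
      · apply Differentiable.fun_sum
        intro i _
        apply Differentiable.div_const
        exact (Differentiable.pow (differentiable_id.const_mul c) i).const_mul _
    have hR0 : R 0 = 0 := by
      simp [hRdef, Finset.sum_range_succ']
    have hderiv : ∀ h : ℝ, deriv R h =
        c * (deriv f (x + c*h) - ∑ i ∈ Finset.range (n+1),
          iteratedDeriv i (deriv f) x * (c*h)^i / (i.factorial : ℝ)) := by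
      intro h
      have h1 : HasDerivAt (fun h : ℝ => x + c*h) c h := by
        simpa using ((hasDerivAt_id h).const_mul c).const_add x
      have h2 : HasDerivAt (fun h : ℝ => f (x + c*h)) (deriv f (x + c*h) * c) h :=
        (hfd (x + c*h)).hasDerivAt.comp h h1
      have h3 : ∀ i : ℕ, HasDerivAt (fun h : ℝ => iteratedDeriv i f x * (c*h)^i / (i.factorial : ℝ))
          (iteratedDeriv i f x * (i * (c*h)^(i-1) * c) / (i.factorial : ℝ)) h := by
        intro i
        have : HasDerivAt (fun h : ℝ => (c*h)^i) (i * (c*h)^(i-1) * c) h := by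
          have hb : HasDerivAt (fun h : ℝ => c*h) c h := by
            simpa using (hasDerivAt_id h).const_mul c
          exact (hasDerivAt_pow i (c*h)).comp h hb
        exact (this.const_mul _).div_const _
      have h4 : HasDerivAt (fun h : ℝ => ∑ i ∈ Finset.range (n+2),
          iteratedDeriv i f x * (c*h)^i / (i.factorial : ℝ))
          (∑ i ∈ Finset.range (n+2),
            iteratedDeriv i f x * (i * (c*h)^(i-1) * c) / (i.factorial : ℝ)) h :=
        HasDerivAt.fun_sum fun i _ => h3 i
      have h5 := (h2.fun_sub h4).deriv
      rw [h5]
      rw [Finset.sum_range_succ'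
        (fun i => iteratedDeriv i f x * (↑i * (c*h)^(i-1) * c) / (i.factorial : ℝ))]
      simp only [Nat.cast_zero, zero_mul, mul_zero, zero_div, add_zero]
      have hcong : ∀ i ∈ Finset.range (n+1),
          iteratedDeriv (i+1) f x * (↑(i+1) * (c*h)^(i+1-1) * c) / ((i+1).factorial : ℝ)
            = c * (iteratedDeriv i (deriv f) x * (c*h)^i / (i.factorial : ℝ)) := by
        intro i _
        rw [iteratedDeriv_succ']
        have hfac : ((i+1).factorial : ℝ) = (↑i + 1) * (i.factorial : ℝ) := by
          rw [Nat.factorial_succ]; push_cast; ring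
        have hne : (i.factorial : ℝ) ≠ 0 := Nat.cast_ne_zero.2 i.factorial_ne_zero
        have hne1 : (↑i + 1 : ℝ) ≠ 0 := by positivity
        rw [hfac, Nat.add_sub_cancel, Nat.cast_succ]
        field_simp
      rw [Finset.sum_congr rfl hcong]
      rw [mul_sub, Finset.mul_sum]
      ring
    have hdO : deriv R =O[𝓝 (0:ℝ)] fun h => h ^ (n+1) := by
      have hih := (ih (deriv f) (contDiff_infty_iff_deriv.mp hf).2 x c).const_mul_left c
      refine IsBigO.congr' hih ?_ (EventuallyEq.refl _ _)
      filter_upwards with h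
      rw [hderiv h]
    exact isBigO_succ_of_deriv hRdiff hR0 hdO

/-- Degree-7 Taylor polynomial of `h ↦ u (x + c*h)` at `0`. -/
noncomputable def TT (u : ℝ → ℝ) (x c h : ℝ) : ℝ :=
  ∑ i ∈ Finset.range 8, iteratedDeriv i u x * (c*h)^i / (i.factorial : ℝ)

/-- Taylor remainder of `h ↦ u (x + c*h)` at `0`. -/
noncomputable def ww (u : ℝ → ℝ) (x c h : ℝ) : ℝ := u (x + c*h) - TT u x c h

set_option maxHeartbeats 16000000 in
/-- The O(γ⁴,α²) holistic (7-point) discretisation is fourth-order consistent with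
the Kuramoto–Sivashinsky equation, including its nonlinear terms. -/
theorem holistic_7pt_fourth_order_consistent (α : ℝ) (u : ℝ → ℝ) (hu : ContDiff ℝ (⊤ : ℕ∞) u)
    (x : ℝ) :
    (fun h : ℝ =>
      (-(α / h ^ 2) * cdel h (cdel h u) x
        - (α / h) * u x * cdel h (cmu h u) x
        - (4 / h ^ 4) * cdel h (cdel h (cdel h (cdel h u))) x
        + (α / (12 * h ^ 2)) * cdel h (cdel h (cdel h (cdel h u))) x
        + (2 / (3 * h ^ 4)) * cdel h (cdel h (cdel h (cdel h (cdel h (cdel h u))))) x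
        - (α / (90 * h ^ 2)) * cdel h (cdel h (cdel h (cdel h (cdel h (cdel h u))))) x
        + (α / (12 * h)) *
            (2 * u x * cdel h (cdel h (cdel h (cmu h u))) x
              + cdel h (cdel h u) x * cdel h (cdel h (cdel h (cmu h u))) x
              + cdel h (cdel h (cdel h (cdel h u))) x * cdel h (cmu h u) x)
        - (α / (480 * h)) *
            (16 * u x * cdel h (cdel h (cdel h (cdel h (cdel h (cmu h u))))) x
              + 30 * cdel h (cdel h (cdel h (cdel h u))) x *
                  cdel h (cdel h (cdel h (cmu h u))) x
              + 40 * cdel h (cdel h u) x * cdel h (cdel h (cdel h (cmu h u))) x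
              + 40 * cdel h (cdel h (cdel h (cdel h u))) x * cdel h (cmu h u) x
              + 28 * cdel h (cdel h u) x *
                  cdel h (cdel h (cdel h (cdel h (cdel h (cmu h u))))) x
              + 14 * cdel h (cdel h (cdel h (cdel h (cdel h (cdel h u))))) x *
                  cdel h (cmu h u) x
              + 7 * cdel h (cdel h (cdel h (cdel h u))) x *
                  cdel h (cdel h (cdel h (cdel h (cdel h (cmu h u))))) x
              + 7 * cdel h (cdel h (cdel h (cdel h (cdel h (cdel h u))))) x *
                  cdel h (cdel h (cdel h (cmu h u))) x))
      - (-(α * (u x * deriv u x + iteratedDeriv 2 u x)) - 4 * iteratedDeriv 4 u x))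
    =O[𝓝[≠] (0 : ℝ)] fun h => h ^ 4 := by
  have hw : ∀ c : ℝ, (fun h : ℝ => ww u x c h) =O[𝓝 (0:ℝ)] (fun h => h^8) := by
    intro c
    have h7 := taylor_remainder_isBigO 7 u (hu.of_le (by simp)) x c
    simpa [ww, TT] using h7
  have pone : ∀ p : ℝ → ℝ, Continuous p → p =O[𝓝 (0:ℝ)] (fun _ => (1:ℝ)) :=
    fun p hp => (hp.tendsto 0).isBigO_one ℝ
  have h8one : (fun h : ℝ => h^8) =O[𝓝 (0:ℝ)] (fun _ => (1:ℝ)) :=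
    ((continuous_pow 8).tendsto 0).isBigO_one ℝ
  have hwone : ∀ c : ℝ, (fun h : ℝ => ww u x c h) =O[𝓝 (0:ℝ)] (fun _ => (1:ℝ)) :=
    fun c => (hw c).trans h8one
  have hmul1 : ∀ f g : ℝ → ℝ, f =O[𝓝 (0:ℝ)] (fun _ => (1:ℝ)) →
      g =O[𝓝 (0:ℝ)] (fun h => h^8) →
      (fun h : ℝ => f h * g h) =O[𝓝 (0:ℝ)] (fun h => h^8) := by
    intro f g hf hg
    simpa using hf.mul hg
  have hmul2 : ∀ f g k : ℝ → ℝ, f =O[𝓝 (0:ℝ)] (fun _ => (1:ℝ)) →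
      g =O[𝓝 (0:ℝ)] (fun _ => (1:ℝ)) →
      k =O[𝓝 (0:ℝ)] (fun h => h^8) →
      (fun h : ℝ => f h * g h * k h) =O[𝓝 (0:ℝ)] (fun h => h^8) := by
    intro f g k hf hg hk
    simpa using (hf.mul hg).mul hk
  -- bridge lemmas
  have hb2 : ∀ h : ℝ, cdel h (cdel h u) x = u (x + 1*h) - 2*u x + u (x + (-1)*h) := by
    intro h; simp only [cdel]; ring_nf
  have hb1 : ∀ h : ℝ, cdel h (cmu h u) x = (u (x + 1*h) - u (x + (-1)*h))/2 := by
    intro h; simp only [cdel, cmu]; ring_nf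
  have hb4 : ∀ h : ℝ, cdel h (cdel h (cdel h (cdel h u))) x
      = u (x + 2*h) - 4*u (x + 1*h) + 6*u x - 4*u (x + (-1)*h) + u (x + (-2)*h) := by
    intro h; simp only [cdel]; ring_nf
  have hb6 : ∀ h : ℝ, cdel h (cdel h (cdel h (cdel h (cdel h (cdel h u))))) x
      = u (x + 3*h) - 6*u (x + 2*h) + 15*u (x + 1*h) - 20*u x
        + 15*u (x + (-1)*h) - 6*u (x + (-2)*h) + u (x + (-3)*h) := by
    intro h; simp only [cdel]; ring_nf
  have hb3 : ∀ h : ℝ, cdel h (cdel h (cdel h (cmu h u))) x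
      = (u (x + 2*h) - 2*u (x + 1*h) + 2*u (x + (-1)*h) - u (x + (-2)*h))/2 := by
    intro h; simp only [cdel, cmu]; ring_nf
  have hb5 : ∀ h : ℝ, cdel h (cdel h (cdel h (cdel h (cdel h (cmu h u))))) x
      = (u (x + 3*h) - 4*u (x + 2*h) + 5*u (x + 1*h) - 5*u (x + (-1)*h)
          + 4*u (x + (-2)*h) - u (x + (-3)*h))/2 := by
    intro h; simp only [cdel, cmu]; ring_nf
  have huval : ∀ c hh : ℝ, u (x + c*hh) = TT u x c hh + ww u x c hh := by
    intro c hh; simp [ww]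
  have hT : ∀ c hh : ℝ, TT u x c hh
      = u x + deriv u x * (c*hh) + iteratedDeriv 2 u x * (c*hh)^2/2
        + iteratedDeriv 3 u x * (c*hh)^3/6 + iteratedDeriv 4 u x * (c*hh)^4/24
        + iteratedDeriv 5 u x * (c*hh)^5/120 + iteratedDeriv 6 u x * (c*hh)^6/720
        + iteratedDeriv 7 u x * (c*hh)^7/5040 := by
    intro c hh
    rw [TT]
    rw [Finset.sum_range_succ, Finset.sum_range_succ, Finset.sum_range_succ,
      Finset.sum_range_succ, Finset.sum_range_succ, Finset.sum_range_succ,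
      Finset.sum_range_succ, Finset.sum_range_succ, Finset.sum_range_zero]
    simp only [iteratedDeriv_zero, iteratedDeriv_one]
    norm_num [Nat.factorial]
  -- the polynomially-rewritten form of h^4 * (scheme - pde)
  have heq : ∀ h : ℝ, h ≠ 0 →
      h^4 * ((-(α / h ^ 2) * cdel h (cdel h u) x
        - (α / h) * u x * cdel h (cmu h u) x
        - (4 / h ^ 4) * cdel h (cdel h (cdel h (cdel h u))) x
        + (α / (12 * h ^ 2)) * cdel h (cdel h (cdel h (cdel h u))) x
        + (2 / (3 * h ^ 4)) * cdel h (cdel h (cdel h (cdel h (cdel h (cdel h u))))) x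
        - (α / (90 * h ^ 2)) * cdel h (cdel h (cdel h (cdel h (cdel h (cdel h u))))) x
        + (α / (12 * h)) *
            (2 * u x * cdel h (cdel h (cdel h (cmu h u))) x
              + cdel h (cdel h u) x * cdel h (cdel h (cdel h (cmu h u))) x
              + cdel h (cdel h (cdel h (cdel h u))) x * cdel h (cmu h u) x)
        - (α / (480 * h)) *
            (16 * u x * cdel h (cdel h (cdel h (cdel h (cdel h (cmu h u))))) x
              + 30 * cdel h (cdel h (cdel h (cdel h u))) x *
                  cdel h (cdel h (cdel h (cmu h u))) x
              + 40 * cdel h (cdel h u) x * cdel h (cdel h (cdel h (cmu h u))) x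
              + 40 * cdel h (cdel h (cdel h (cdel h u))) x * cdel h (cmu h u) x
              + 28 * cdel h (cdel h u) x *
                  cdel h (cdel h (cdel h (cdel h (cdel h (cmu h u))))) x
              + 14 * cdel h (cdel h (cdel h (cdel h (cdel h (cdel h u))))) x *
                  cdel h (cmu h u) x
              + 7 * cdel h (cdel h (cdel h (cdel h u))) x *
                  cdel h (cdel h (cdel h (cdel h (cdel h (cmu h u))))) x
              + 7 * cdel h (cdel h (cdel h (cdel h (cdel h (cdel h u))))) x *
                  cdel h (cdel h (cdel h (cmu h u))) x))
      - (-(α * (u x * deriv u x + iteratedDeriv 2 u x)) - 4 * iteratedDeriv 4 u x)) =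
      h^8 * ((-1/16 : ℝ) * h^2 * α * (iteratedDeriv 3 u x) * (iteratedDeriv 4 u x) + (-7/120 : ℝ) * h^2 * α * (iteratedDeriv 2 u x) * (iteratedDeriv 5 u x) + (-7/240 : ℝ) * h^2 * α * (deriv u x) * (iteratedDeriv 6 u x) + (-1/140 : ℝ) * h^2 * α * (u x) * (iteratedDeriv 7 u x) + (-101/2880 : ℝ) * h^4 * α * (iteratedDeriv 4 u x) * (iteratedDeriv 5 u x) + (-43/1440 : ℝ) * h^4 * α * (iteratedDeriv 3 u x) * (iteratedDeriv 6 u x) + (-7/360 : ℝ) * h^4 * α * (iteratedDeriv 2 u x) * (iteratedDeriv 7 u x) + (-157/17280 : ℝ) * h^6 * α * (iteratedDeriv 5 u x) * (iteratedDeriv 6 u x) + (-139/17280 : ℝ) * h^6 * α * (iteratedDeriv 4 u x) * (iteratedDeriv 7 u x) + (-31/20736 : ℝ) * h^8 * α * (iteratedDeriv 6 u x) * (iteratedDeriv 7 u x))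
      + ((2/3 : ℝ) + (-1/90 : ℝ) * h^2 * α + (1/60 : ℝ) * h^3 * α * (u x) + (-7/240 : ℝ) * h^4 * α * (deriv u x) + (7/240 : ℝ) * h^5 * α * (iteratedDeriv 2 u x) + (-7/360 : ℝ) * h^6 * α * (iteratedDeriv 3 u x) + (7/720 : ℝ) * h^7 * α * (iteratedDeriv 4 u x) + (-7/1800 : ℝ) * h^8 * α * (iteratedDeriv 5 u x) + (7/5400 : ℝ) * h^9 * α * (iteratedDeriv 6 u x) + (-1/2700 : ℝ) * h^10 * α * (iteratedDeriv 7 u x)) * (ww u x (-3) h)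
      + ((2/3 : ℝ) + (-1/90 : ℝ) * h^2 * α + (-1/60 : ℝ) * h^3 * α * (u x) + (-7/240 : ℝ) * h^4 * α * (deriv u x) + (-7/240 : ℝ) * h^5 * α * (iteratedDeriv 2 u x) + (-7/360 : ℝ) * h^6 * α * (iteratedDeriv 3 u x) + (-7/720 : ℝ) * h^7 * α * (iteratedDeriv 4 u x) + (-7/1800 : ℝ) * h^8 * α * (iteratedDeriv 5 u x) + (-7/5400 : ℝ) * h^9 * α * (iteratedDeriv 6 u x) + (-1/2700 : ℝ) * h^10 * α * (iteratedDeriv 7 u x)) * (ww u x 3 h)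
      + ((-8 : ℝ) + (3/20 : ℝ) * h^2 * α + (-3/20 : ℝ) * h^3 * α * (u x) + (7/40 : ℝ) * h^4 * α * (deriv u x) + (-7/60 : ℝ) * h^5 * α * (iteratedDeriv 2 u x) + (13/240 : ℝ) * h^6 * α * (iteratedDeriv 3 u x) + (-11/1440 : ℝ) * h^7 * α * (iteratedDeriv 4 u x) + (-11/1600 : ℝ) * h^8 * α * (iteratedDeriv 5 u x) + (79/10800 : ℝ) * h^9 * α * (iteratedDeriv 6 u x) + (-121/28800 : ℝ) * h^10 * α * (iteratedDeriv 7 u x)) * (ww u x (-2) h)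
      + ((7/480 : ℝ) * h^3 * α) * (ww u x (-2) h) * (ww u x (-3) h)
      + ((-1/24 : ℝ) * h^3 * α) * (ww u x (-2) h) * (ww u x (-2) h)
      + ((-8 : ℝ) + (3/20 : ℝ) * h^2 * α + (3/20 : ℝ) * h^3 * α * (u x) + (7/40 : ℝ) * h^4 * α * (deriv u x) + (7/60 : ℝ) * h^5 * α * (iteratedDeriv 2 u x) + (13/240 : ℝ) * h^6 * α * (iteratedDeriv 3 u x) + (11/1440 : ℝ) * h^7 * α * (iteratedDeriv 4 u x) + (-11/1600 : ℝ) * h^8 * α * (iteratedDeriv 5 u x) + (-79/10800 : ℝ) * h^9 * α * (iteratedDeriv 6 u x) + (-121/28800 : ℝ) * h^10 * α * (iteratedDeriv 7 u x)) * (ww u x 2 h)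
      + ((-7/480 : ℝ) * h^3 * α) * (ww u x 2 h) * (ww u x 3 h)
      + ((1/24 : ℝ) * h^3 * α) * (ww u x 2 h) * (ww u x 2 h)
      + ((26 : ℝ) + (-3/2 : ℝ) * h^2 * α + (3/4 : ℝ) * h^3 * α * (u x) + (-7/16 : ℝ) * h^4 * α * (deriv u x) + (7/48 : ℝ) * h^5 * α * (iteratedDeriv 2 u x) + (-1/24 : ℝ) * h^6 * α * (iteratedDeriv 3 u x) + (-1/72 : ℝ) * h^7 * α * (iteratedDeriv 4 u x) + (1/240 : ℝ) * h^8 * α * (iteratedDeriv 5 u x) + (-17/4320 : ℝ) * h^9 * α * (iteratedDeriv 6 u x) + (1/1440 : ℝ) * h^10 * α * (iteratedDeriv 7 u x)) * (ww u x (-1) h)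
      + ((-1/24 : ℝ) * h^3 * α) * (ww u x (-1) h) * (ww u x (-2) h)
      + ((-1/96 : ℝ) * h^3 * α) * (ww u x (-1) h) * (ww u x 2 h)
      + ((1/4 : ℝ) * h^3 * α) * (ww u x (-1) h) * (ww u x (-1) h)
      + ((26 : ℝ) + (-3/2 : ℝ) * h^2 * α + (-3/4 : ℝ) * h^3 * α * (u x) + (-7/16 : ℝ) * h^4 * α * (deriv u x) + (-7/48 : ℝ) * h^5 * α * (iteratedDeriv 2 u x) + (-1/24 : ℝ) * h^6 * α * (iteratedDeriv 3 u x) + (1/72 : ℝ) * h^7 * α * (iteratedDeriv 4 u x) + (1/240 : ℝ) * h^8 * α * (iteratedDeriv 5 u x) + (17/4320 : ℝ) * h^9 * α * (iteratedDeriv 6 u x) + (1/1440 : ℝ) * h^10 * α * (iteratedDeriv 7 u x)) * (ww u x 1 h)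
      + ((1/96 : ℝ) * h^3 * α) * (ww u x 1 h) * (ww u x (-2) h)
      + ((1/24 : ℝ) * h^3 * α) * (ww u x 1 h) * (ww u x 2 h)
      + ((-1/4 : ℝ) * h^3 * α) * (ww u x 1 h) * (ww u x 1 h) := by
    intro h hne
    rw [hb2 h, hb1 h, hb4 h, hb6 h, hb3 h, hb5 h]
    rw [huval 3 h, huval 2 h, huval 1 h, huval (-1) h, huval (-2) h, huval (-3) h]
    rw [hT 3 h, hT 2 h, hT 1 h, hT (-1) h, hT (-2) h, hT (-3) h]
    field_simp
    ring
  have hR : (fun h : ℝ => h^8 * ((-1/16 : ℝ) * h^2 * α * (iteratedDeriv 3 u x) * (iteratedDeriv 4 u x) + (-7/120 : ℝ) * h^2 * α * (iteratedDeriv 2 u x) * (iteratedDeriv 5 u x) + (-7/240 : ℝ) * h^2 * α * (deriv u x) * (iteratedDeriv 6 u x) + (-1/140 : ℝ) * h^2 * α * (u x) * (iteratedDeriv 7 u x) + (-101/2880 : ℝ) * h^4 * α * (iteratedDeriv 4 u x) * (iteratedDeriv 5 u x) + (-43/1440 : ℝ) * h^4 * α * (iteratedDeriv 3 u x) * (iteratedDeriv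 6 u x) + (-7/360 : ℝ) * h^4 * α * (iteratedDeriv 2 u x) * (iteratedDeriv 7 u x) + (-157/17280 : ℝ) * h^6 * α * (iteratedDeriv 5 u x) * (iteratedDeriv 6 u x) + (-139/17280 : ℝ) * h^6 * α * (iteratedDeriv 4 u x) * (iteratedDeriv 7 u x) + (-31/20736 : ℝ) * h^8 * α * (iteratedDeriv 6 u x) * (iteratedDeriv 7 u x))) =O[𝓝 (0:ℝ)] (fun h => h^8) := by
    simpa using (isBigO_refl (fun h : ℝ => h^8) (𝓝 (0:ℝ))).mul (pone _ (by fun_prop))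
  have ht0 : (fun h : ℝ => ((2/3 : ℝ) + (-1/90 : ℝ) * h^2 * α + (1/60 : ℝ) * h^3 * α * (u x) + (-7/240 : ℝ) * h^4 * α * (deriv u x) + (7/240 : ℝ) * h^5 * α * (iteratedDeriv 2 u x) + (-7/360 : ℝ) * h^6 * α * (iteratedDeriv 3 u x) + (7/720 : ℝ) * h^7 * α * (iteratedDeriv 4 u x) + (-7/1800 : ℝ) * h^8 * α * (iteratedDeriv 5 u x) + (7/5400 : ℝ) * h^9 * α * (iteratedDeriv 6 u x) + (-1/2700 : ℝ) * h^10 * α * (iteratedDeriv 7 u x)) * (ww u x (-3) h)) =O[𝓝 (0:ℝ)] (fun h => h^8) :=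
    hmul1 (fun h : ℝ => ((2/3 : ℝ) + (-1/90 : ℝ) * h^2 * α + (1/60 : ℝ) * h^3 * α * (u x) + (-7/240 : ℝ) * h^4 * α * (deriv u x) + (7/240 : ℝ) * h^5 * α * (iteratedDeriv 2 u x) + (-7/360 : ℝ) * h^6 * α * (iteratedDeriv 3 u x) + (7/720 : ℝ) * h^7 * α * (iteratedDeriv 4 u x) + (-7/1800 : ℝ) * h^8 * α * (iteratedDeriv 5 u x) + (7/5400 : ℝ) * h^9 * α * (iteratedDeriv 6 u x) + (-1/2700 : ℝ) * h^10 * α * (iteratedDeriv 7 u x))) _ (pone _ (by fun_prop)) (hw (-3))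
  have ht1 : (fun h : ℝ => ((2/3 : ℝ) + (-1/90 : ℝ) * h^2 * α + (-1/60 : ℝ) * h^3 * α * (u x) + (-7/240 : ℝ) * h^4 * α * (deriv u x) + (-7/240 : ℝ) * h^5 * α * (iteratedDeriv 2 u x) + (-7/360 : ℝ) * h^6 * α * (iteratedDeriv 3 u x) + (-7/720 : ℝ) * h^7 * α * (iteratedDeriv 4 u x) + (-7/1800 : ℝ) * h^8 * α * (iteratedDeriv 5 u x) + (-7/5400 : ℝ) * h^9 * α * (iteratedDeriv 6 u x) + (-1/2700 : ℝ) * h^10 * α * (iteratedDeriv 7 u x)) * (ww u x 3 h)) =O[𝓝 (0:ℝ)] (fun h => h^8) :=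
    hmul1 (fun h : ℝ => ((2/3 : ℝ) + (-1/90 : ℝ) * h^2 * α + (-1/60 : ℝ) * h^3 * α * (u x) + (-7/240 : ℝ) * h^4 * α * (deriv u x) + (-7/240 : ℝ) * h^5 * α * (iteratedDeriv 2 u x) + (-7/360 : ℝ) * h^6 * α * (iteratedDeriv 3 u x) + (-7/720 : ℝ) * h^7 * α * (iteratedDeriv 4 u x) + (-7/1800 : ℝ) * h^8 * α * (iteratedDeriv 5 u x) + (-7/5400 : ℝ) * h^9 * α * (iteratedDeriv 6 u x) + (-1/2700 : ℝ) * h^10 * α * (iteratedDeriv 7 u x))) _ (pone _ (by fun_prop)) (hw 3)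
  have ht2 : (fun h : ℝ => ((-8 : ℝ) + (3/20 : ℝ) * h^2 * α + (-3/20 : ℝ) * h^3 * α * (u x) + (7/40 : ℝ) * h^4 * α * (deriv u x) + (-7/60 : ℝ) * h^5 * α * (iteratedDeriv 2 u x) + (13/240 : ℝ) * h^6 * α * (iteratedDeriv 3 u x) + (-11/1440 : ℝ) * h^7 * α * (iteratedDeriv 4 u x) + (-11/1600 : ℝ) * h^8 * α * (iteratedDeriv 5 u x) + (79/10800 : ℝ) * h^9 * α * (iteratedDeriv 6 u x) + (-121/28800 : ℝ) * h^10 * α * (iteratedDeriv 7 u x)) * (ww u x (-2) h)) =O[𝓝 (0:ℝ)] (fun h => h^8) :=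
    hmul1 (fun h : ℝ => ((-8 : ℝ) + (3/20 : ℝ) * h^2 * α + (-3/20 : ℝ) * h^3 * α * (u x) + (7/40 : ℝ) * h^4 * α * (deriv u x) + (-7/60 : ℝ) * h^5 * α * (iteratedDeriv 2 u x) + (13/240 : ℝ) * h^6 * α * (iteratedDeriv 3 u x) + (-11/1440 : ℝ) * h^7 * α * (iteratedDeriv 4 u x) + (-11/1600 : ℝ) * h^8 * α * (iteratedDeriv 5 u x) + (79/10800 : ℝ) * h^9 * α * (iteratedDeriv 6 u x) + (-121/28800 : ℝ) * h^10 * α * (iteratedDeriv 7 u x))) _ (pone _ (by fun_prop)) (hw (-2))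
  have ht3 : (fun h : ℝ => ((7/480 : ℝ) * h^3 * α) * (ww u x (-2) h) * (ww u x (-3) h)) =O[𝓝 (0:ℝ)] (fun h => h^8) :=
    hmul2 (fun h : ℝ => ((7/480 : ℝ) * h^3 * α)) _ _ (pone _ (by fun_prop)) (hwone (-2)) (hw (-3))
  have ht4 : (fun h : ℝ => ((-1/24 : ℝ) * h^3 * α) * (ww u x (-2) h) * (ww u x (-2) h)) =O[𝓝 (0:ℝ)] (fun h => h^8) :=
    hmul2 (fun h : ℝ => ((-1/24 : ℝ) * h^3 * α)) _ _ (pone _ (by fun_prop)) (hwone (-2)) (hw (-2))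
  have ht5 : (fun h : ℝ => ((-8 : ℝ) + (3/20 : ℝ) * h^2 * α + (3/20 : ℝ) * h^3 * α * (u x) + (7/40 : ℝ) * h^4 * α * (deriv u x) + (7/60 : ℝ) * h^5 * α * (iteratedDeriv 2 u x) + (13/240 : ℝ) * h^6 * α * (iteratedDeriv 3 u x) + (11/1440 : ℝ) * h^7 * α * (iteratedDeriv 4 u x) + (-11/1600 : ℝ) * h^8 * α * (iteratedDeriv 5 u x) + (-79/10800 : ℝ) * h^9 * α * (iteratedDeriv 6 u x) + (-121/28800 : ℝ) * h^10 * α * (iteratedDeriv 7 u x)) * (ww u x 2 h)) =O[𝓝 (0:ℝ)] (fun h => h^8) :=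
    hmul1 (fun h : ℝ => ((-8 : ℝ) + (3/20 : ℝ) * h^2 * α + (3/20 : ℝ) * h^3 * α * (u x) + (7/40 : ℝ) * h^4 * α * (deriv u x) + (7/60 : ℝ) * h^5 * α * (iteratedDeriv 2 u x) + (13/240 : ℝ) * h^6 * α * (iteratedDeriv 3 u x) + (11/1440 : ℝ) * h^7 * α * (iteratedDeriv 4 u x) + (-11/1600 : ℝ) * h^8 * α * (iteratedDeriv 5 u x) + (-79/10800 : ℝ) * h^9 * α * (iteratedDeriv 6 u x) + (-121/28800 : ℝ) * h^10 * α * (iteratedDeriv 7 u x))) _ (pone _ (by fun_prop)) (hw 2)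
  have ht6 : (fun h : ℝ => ((-7/480 : ℝ) * h^3 * α) * (ww u x 2 h) * (ww u x 3 h)) =O[𝓝 (0:ℝ)] (fun h => h^8) :=
    hmul2 (fun h : ℝ => ((-7/480 : ℝ) * h^3 * α)) _ _ (pone _ (by fun_prop)) (hwone 2) (hw 3)
  have ht7 : (fun h : ℝ => ((1/24 : ℝ) * h^3 * α) * (ww u x 2 h) * (ww u x 2 h)) =O[𝓝 (0:ℝ)] (fun h => h^8) :=
    hmul2 (fun h : ℝ => ((1/24 : ℝ) * h^3 * α)) _ _ (pone _ (by fun_prop)) (hwone 2) (hw 2)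
  have ht8 : (fun h : ℝ => ((26 : ℝ) + (-3/2 : ℝ) * h^2 * α + (3/4 : ℝ) * h^3 * α * (u x) + (-7/16 : ℝ) * h^4 * α * (deriv u x) + (7/48 : ℝ) * h^5 * α * (iteratedDeriv 2 u x) + (-1/24 : ℝ) * h^6 * α * (iteratedDeriv 3 u x) + (-1/72 : ℝ) * h^7 * α * (iteratedDeriv 4 u x) + (1/240 : ℝ) * h^8 * α * (iteratedDeriv 5 u x) + (-17/4320 : ℝ) * h^9 * α * (iteratedDeriv 6 u x) + (1/1440 : ℝ) * h^10 * α * (iteratedDeriv 7 u x)) * (ww u x (-1) h)) =O[𝓝 (0:ℝ)] (fun h => h^8) :=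
    hmul1 (fun h : ℝ => ((26 : ℝ) + (-3/2 : ℝ) * h^2 * α + (3/4 : ℝ) * h^3 * α * (u x) + (-7/16 : ℝ) * h^4 * α * (deriv u x) + (7/48 : ℝ) * h^5 * α * (iteratedDeriv 2 u x) + (-1/24 : ℝ) * h^6 * α * (iteratedDeriv 3 u x) + (-1/72 : ℝ) * h^7 * α * (iteratedDeriv 4 u x) + (1/240 : ℝ) * h^8 * α * (iteratedDeriv 5 u x) + (-17/4320 : ℝ) * h^9 * α * (iteratedDeriv 6 u x) + (1/1440 : ℝ) * h^10 * α * (iteratedDeriv 7 u x))) _ (pone _ (by fun_prop)) (hw (-1))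
  have ht9 : (fun h : ℝ => ((-1/24 : ℝ) * h^3 * α) * (ww u x (-1) h) * (ww u x (-2) h)) =O[𝓝 (0:ℝ)] (fun h => h^8) :=
    hmul2 (fun h : ℝ => ((-1/24 : ℝ) * h^3 * α)) _ _ (pone _ (by fun_prop)) (hwone (-1)) (hw (-2))
  have ht10 : (fun h : ℝ => ((-1/96 : ℝ) * h^3 * α) * (ww u x (-1) h) * (ww u x 2 h)) =O[𝓝 (0:ℝ)] (fun h => h^8) :=
    hmul2 (fun h : ℝ => ((-1/96 : ℝ) * h^3 * α)) _ _ (pone _ (by fun_prop)) (hwone (-1)) (hw 2)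
  have ht11 : (fun h : ℝ => ((1/4 : ℝ) * h^3 * α) * (ww u x (-1) h) * (ww u x (-1) h)) =O[𝓝 (0:ℝ)] (fun h => h^8) :=
    hmul2 (fun h : ℝ => ((1/4 : ℝ) * h^3 * α)) _ _ (pone _ (by fun_prop)) (hwone (-1)) (hw (-1))
  have ht12 : (fun h : ℝ => ((26 : ℝ) + (-3/2 : ℝ) * h^2 * α + (-3/4 : ℝ) * h^3 * α * (u x) + (-7/16 : ℝ) * h^4 * α * (deriv u x) + (-7/48 : ℝ) * h^5 * α * (iteratedDeriv 2 u x) + (-1/24 : ℝ) * h^6 * α * (iteratedDeriv 3 u x) + (1/72 : ℝ) * h^7 * α * (iteratedDeriv 4 u x) + (1/240 : ℝ) * h^8 * α * (iteratedDeriv 5 u x) + (17/4320 : ℝ) * h^9 * α * (iteratedDeriv 6 u x) + (1/1440 : ℝ) * h^10 * α * (iteratedDeriv 7 u x)) * (ww u x 1 h)) =O[𝓝 (0:ℝ)] (fun h => h^8) :=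
    hmul1 (fun h : ℝ => ((26 : ℝ) + (-3/2 : ℝ) * h^2 * α + (-3/4 : ℝ) * h^3 * α * (u x) + (-7/16 : ℝ) * h^4 * α * (deriv u x) + (-7/48 : ℝ) * h^5 * α * (iteratedDeriv 2 u x) + (-1/24 : ℝ) * h^6 * α * (iteratedDeriv 3 u x) + (1/72 : ℝ) * h^7 * α * (iteratedDeriv 4 u x) + (1/240 : ℝ) * h^8 * α * (iteratedDeriv 5 u x) + (17/4320 : ℝ) * h^9 * α * (iteratedDeriv 6 u x) + (1/1440 : ℝ) * h^10 * α * (iteratedDeriv 7 u x))) _ (pone _ (by fun_prop)) (hw 1)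
  have ht13 : (fun h : ℝ => ((1/96 : ℝ) * h^3 * α) * (ww u x 1 h) * (ww u x (-2) h)) =O[𝓝 (0:ℝ)] (fun h => h^8) :=
    hmul2 (fun h : ℝ => ((1/96 : ℝ) * h^3 * α)) _ _ (pone _ (by fun_prop)) (hwone 1) (hw (-2))
  have ht14 : (fun h : ℝ => ((1/24 : ℝ) * h^3 * α) * (ww u x 1 h) * (ww u x 2 h)) =O[𝓝 (0:ℝ)] (fun h => h^8) :=
    hmul2 (fun h : ℝ => ((1/24 : ℝ) * h^3 * α)) _ _ (pone _ (by fun_prop)) (hwone 1) (hw 2)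
  have ht15 : (fun h : ℝ => ((-1/4 : ℝ) * h^3 * α) * (ww u x 1 h) * (ww u x 1 h)) =O[𝓝 (0:ℝ)] (fun h => h^8) :=
    hmul2 (fun h : ℝ => ((-1/4 : ℝ) * h^3 * α)) _ _ (pone _ (by fun_prop)) (hwone 1) (hw 1)
  have hQ : (fun h : ℝ => h^8 * ((-1/16 : ℝ) * h^2 * α * (iteratedDeriv 3 u x) * (iteratedDeriv 4 u x) + (-7/120 : ℝ) * h^2 * α * (iteratedDeriv 2 u x) * (iteratedDeriv 5 u x) + (-7/240 : ℝ) * h^2 * α * (deriv u x) * (iteratedDeriv 6 u x) + (-1/140 : ℝ) * h^2 * α * (u x) * (iteratedDeriv 7 u x) + (-101/2880 : ℝ) * h^4 * α * (iteratedDeriv 4 u x) * (iteratedDeriv 5 u x) + (-43/1440 : ℝ) * h^4 * α * (iteratedDeriv 3 u x) * (iteratedDeriv 6 u x) + (-7/360 : ℝ) * h^4 * α * (iteratedDeriv 2 u x) * (iteratedDeriv 7 u x) + (-157/17280 : ℝ) * h^6 * α * (iteratedDeriv 5 u x) * (iteratedDeriv 6 u x) + (-139/17280 : ℝ) * h^6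 * α * (iteratedDeriv 4 u x) * (iteratedDeriv 7 u x) + (-31/20736 : ℝ) * h^8 * α * (iteratedDeriv 6 u x) * (iteratedDeriv 7 u x))
      + ((2/3 : ℝ) + (-1/90 : ℝ) * h^2 * α + (1/60 : ℝ) * h^3 * α * (u x) + (-7/240 : ℝ) * h^4 * α * (deriv u x) + (7/240 : ℝ) * h^5 * α * (iteratedDeriv 2 u x) + (-7/360 : ℝ) * h^6 * α * (iteratedDeriv 3 u x) + (7/720 : ℝ) * h^7 * α * (iteratedDeriv 4 u x) + (-7/1800 : ℝ) * h^8 * α * (iteratedDeriv 5 u x) + (7/5400 : ℝ) * h^9 * α * (iteratedDeriv 6 u x) + (-1/2700 : ℝ) * h^10 * α * (iteratedDeriv 7 u x)) * (ww u x (-3) h)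
      + ((2/3 : ℝ) + (-1/90 : ℝ) * h^2 * α + (-1/60 : ℝ) * h^3 * α * (u x) + (-7/240 : ℝ) * h^4 * α * (deriv u x) + (-7/240 : ℝ) * h^5 * α * (iteratedDeriv 2 u x) + (-7/360 : ℝ) * h^6 * α * (iteratedDeriv 3 u x) + (-7/720 : ℝ) * h^7 * α * (iteratedDeriv 4 u x) + (-7/1800 : ℝ) * h^8 * α * (iteratedDeriv 5 u x) + (-7/5400 : ℝ) * h^9 * α * (iteratedDeriv 6 u x) + (-1/2700 : ℝ) * h^10 * α * (iteratedDeriv 7 u x)) * (ww u x 3 h)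
      + ((-8 : ℝ) + (3/20 : ℝ) * h^2 * α + (-3/20 : ℝ) * h^3 * α * (u x) + (7/40 : ℝ) * h^4 * α * (deriv u x) + (-7/60 : ℝ) * h^5 * α * (iteratedDeriv 2 u x) + (13/240 : ℝ) * h^6 * α * (iteratedDeriv 3 u x) + (-11/1440 : ℝ) * h^7 * α * (iteratedDeriv 4 u x) + (-11/1600 : ℝ) * h^8 * α * (iteratedDeriv 5 u x) + (79/10800 : ℝ) * h^9 * α * (iteratedDeriv 6 u x) + (-121/28800 : ℝ) * h^10 * α * (iteratedDeriv 7 u x)) * (ww u x (-2) h)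
      + ((7/480 : ℝ) * h^3 * α) * (ww u x (-2) h) * (ww u x (-3) h)
      + ((-1/24 : ℝ) * h^3 * α) * (ww u x (-2) h) * (ww u x (-2) h)
      + ((-8 : ℝ) + (3/20 : ℝ) * h^2 * α + (3/20 : ℝ) * h^3 * α * (u x) + (7/40 : ℝ) * h^4 * α * (deriv u x) + (7/60 : ℝ) * h^5 * α * (iteratedDeriv 2 u x) + (13/240 : ℝ) * h^6 * α * (iteratedDeriv 3 u x) + (11/1440 : ℝ) * h^7 * α * (iteratedDeriv 4 u x) + (-11/1600 : ℝ) * h^8 * α * (iteratedDeriv 5 u x) + (-79/10800 : ℝ) * h^9 * α * (iteratedDeriv 6 u x) + (-121/28800 : ℝ) * h^10 * α * (iteratedDeriv 7 u x)) * (ww u x 2 h)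
      + ((-7/480 : ℝ) * h^3 * α) * (ww u x 2 h) * (ww u x 3 h)
      + ((1/24 : ℝ) * h^3 * α) * (ww u x 2 h) * (ww u x 2 h)
      + ((26 : ℝ) + (-3/2 : ℝ) * h^2 * α + (3/4 : ℝ) * h^3 * α * (u x) + (-7/16 : ℝ) * h^4 * α * (deriv u x) + (7/48 : ℝ) * h^5 * α * (iteratedDeriv 2 u x) + (-1/24 : ℝ) * h^6 * α * (iteratedDeriv 3 u x) + (-1/72 : ℝ) * h^7 * α * (iteratedDeriv 4 u x) + (1/240 : ℝ) * h^8 * α * (iteratedDeriv 5 u x) + (-17/4320 : ℝ) * h^9 * α * (iteratedDeriv 6 u x) + (1/1440 : ℝ) * h^10 * α * (iteratedDeriv 7 u x)) * (ww u x (-1) h)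
      + ((-1/24 : ℝ) * h^3 * α) * (ww u x (-1) h) * (ww u x (-2) h)
      + ((-1/96 : ℝ) * h^3 * α) * (ww u x (-1) h) * (ww u x 2 h)
      + ((1/4 : ℝ) * h^3 * α) * (ww u x (-1) h) * (ww u x (-1) h)
      + ((26 : ℝ) + (-3/2 : ℝ) * h^2 * α + (-3/4 : ℝ) * h^3 * α * (u x) + (-7/16 : ℝ) * h^4 * α * (deriv u x) + (-7/48 : ℝ) * h^5 * α * (iteratedDeriv 2 u x) + (-1/24 : ℝ) * h^6 * α * (iteratedDeriv 3 u x) + (1/72 : ℝ) * h^7 * α * (iteratedDeriv 4 u x) + (1/240 : ℝ) * h^8 * α * (iteratedDeriv 5 u x) + (17/4320 : ℝ) * h^9 * α * (iteratedDeriv 6 u x) + (1/1440 : ℝ) * h^10 * α * (iteratedDeriv 7 u x)) * (ww u x 1 h)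
      + ((1/96 : ℝ) * h^3 * α) * (ww u x 1 h) * (ww u x (-2) h)
      + ((1/24 : ℝ) * h^3 * α) * (ww u x 1 h) * (ww u x 2 h)
      + ((-1/4 : ℝ) * h^3 * α) * (ww u x 1 h) * (ww u x 1 h)) =O[𝓝 (0:ℝ)] (fun h => h^8) := by
    exact ((((((((((((((((hR.add ht0).add ht1).add ht2).add ht3).add ht4).add ht5).add ht6).add ht7).add ht8).add ht9).add ht10).add ht11).add ht12).add ht13).add ht14).add ht15)
  have hQ' := hQ.mono (nhdsWithin_le_nhds : 𝓝[≠] (0:ℝ) ≤ 𝓝 0)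
  have hmul := (isBigO_refl (fun h : ℝ => (h^4)⁻¹) (𝓝[≠] (0:ℝ))).mul hQ'
  refine hmul.congr' ?_ ?_
  · filter_upwards [self_mem_nhdsWithin] with h hne
    have hne0 : h ≠ 0 := hne
    have h4 : (h:ℝ)^4 ≠ 0 := pow_ne_zero _ hne0
    rw [← heq h hne0, inv_mul_cancel_left₀ h4]
  · filter_upwards [self_mem_nhdsWithin] with h hne
    have hne0 : h ≠ 0 := hne
    have h4 : (h:ℝ)^4 ≠ 0 := pow_ne_zero _ hne0
    rw [show (h:ℝ)^8 = h^4 * h^4 by ring, inv_mul_cancel_left₀ h4]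
end

section
/- Let α ∈ ℝ, let u : ℝ → ℝ be infinitely differentiable, and fix x ∈ ℝ. For h ≠ 0 define the 4th-order centered difference discretisation of the Kuramoto–Sivashinsky right-hand side applied to u at x: H(h) := −(α/h)·( u(x)(δμu)(x) − (1/6)u(x)(δ³μu)(x) ) − (α/h²)·( (δ²u)(x) − (1/12)(δ⁴u)(x) ) − (4/h⁴)·( (δ⁴u)(x) − (1/6)(δ⁶u)(x) ), with difference operators of step h. Then, as h → 0, H(h) = −α( u(x)u′(x) + u″(x) ) − 4u⁗(x) + O(h⁴); that is, the scheme is fourth-order consistent with the Kuramoto–Sivashinsky equation. -/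
open Filter Topology Asymptotics

lemma taylor_isBigO : ∀ (n : ℕ) (f : ℝ → ℝ), ContDiff ℝ (⊤ : ℕ∞) f → ∀ x : ℝ,
    (fun t : ℝ => f (x + t) - ∑ i ∈ Finset.range (n+1), iteratedDeriv i f x / (Nat.factorial i : ℝ) * t ^ i)
      =O[𝓝 (0:ℝ)] fun t => t ^ (n+1) := by
  intro n
  induction n with
  | zero =>
    intro f hf x
    have h1 : HasDerivAt (fun t : ℝ => f (x + t)) (deriv f x) 0 := by
      have := (((hf.differentiable (by simp)) (x + 0)).hasDerivAt.comp 0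
        ((hasDerivAt_id (0:ℝ)).const_add x))
      simpa [Function.comp_def] using this
    have h2 := h1.isBigO_sub
    simp only [zero_add, Finset.range_one, Finset.sum_singleton, iteratedDeriv_zero, Nat.factorial_zero,
      Nat.cast_one, div_one, pow_zero, mul_one, pow_one]
    simpa using h2
  | succ n ih =>
    intro f hf x
    have hf' : ContDiff ℝ (⊤ : ℕ∞) (deriv f) := (contDiff_infty_iff_deriv.mp hf).2
    set g : ℝ → ℝ := fun t => f (x + t) - ∑ i ∈ Finset.range (n+2), iteratedDeriv i f x / (Nat.factorial i : ℝ) * t ^ i with hg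
    set φ : ℝ → ℝ := fun t => deriv f (x + t) - ∑ i ∈ Finset.range (n+1), iteratedDeriv i (deriv f) x / (Nat.factorial i : ℝ) * t ^ i with hφ
    have hg0 : g 0 = 0 := by
      simp [hg, Finset.sum_range_succ', iteratedDeriv_zero]
    have hgderiv : ∀ t : ℝ, HasDerivAt g (φ t) t := by
      intro t
      have h1 : HasDerivAt (fun t : ℝ => f (x + t)) (deriv f (x + t)) t := by
        have := (((hf.differentiable (by simp)) (x + t)).hasDerivAt.comp t
          ((hasDerivAt_id t).const_add x))
        simpa [Function.comp_def] using this
      have h2 : HasDerivAt (fun t : ℝ => ∑ i ∈ Finset.range (n+2), iteratedDeriv i f x / (Nat.factorial i : ℝ) * t ^ i)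
          (∑ i ∈ Finset.range (n+2), iteratedDeriv i f x / (Nat.factorial i : ℝ) * (i * t ^ (i-1))) t := by
        exact HasDerivAt.fun_sum fun i _ => (hasDerivAt_pow i t).const_mul _
      have h3 : (∑ i ∈ Finset.range (n+2), iteratedDeriv i f x / (Nat.factorial i : ℝ) * (i * t ^ (i-1)))
          = ∑ i ∈ Finset.range (n+1), iteratedDeriv i (deriv f) x / (Nat.factorial i : ℝ) * t ^ i := by
        rw [Finset.sum_range_succ']
        simp only [Nat.cast_zero, zero_mul, mul_zero, add_zero, Nat.add_sub_cancel]
        refine Finset.sum_congr rfl fun i _ => ?_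
        rw [← iteratedDeriv_succ']
        rw [Nat.factorial_succ]
        push_cast
        have : (Nat.factorial i : ℝ) ≠ 0 := Nat.cast_ne_zero.mpr (Nat.factorial_ne_zero i)
        field_simp
      have h4 := h1.sub h2
      rw [h3] at h4
      exact h4
    have hφO : φ =O[𝓝 (0:ℝ)] fun t => t ^ (n+1) := ih (deriv f) hf' x
    obtain ⟨C, hC, hbound⟩ := hφO.exists_pos
    rw [IsBigOWith] at hbound
    rw [Metric.eventually_nhds_iff] at hbound
    obtain ⟨δ, hδ, hb⟩ := hbound
    rw [isBigO_iff]
    refine ⟨C, ?_⟩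
    rw [Metric.eventually_nhds_iff]
    refine ⟨δ, hδ, fun {t} ht => ?_⟩
    rw [Real.dist_eq, sub_zero] at ht
    have habs : ∀ y ∈ Set.uIcc (0:ℝ) t, |y| ≤ |t| := by
      intro y hy
      rw [Set.mem_uIcc] at hy
      rcases hy with ⟨h1, h2⟩ | ⟨h1, h2⟩
      · rw [abs_le]; constructor
        · linarith [neg_abs_le t, abs_nonneg t]
        · linarith [le_abs_self t]
      · rw [abs_le]; constructor
        · linarith [neg_abs_le t]
        · linarith [le_abs_self t, abs_nonneg t]
    have key := Convex.norm_image_sub_le_of_norm_hasDerivWithin_le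
      (f := g) (f' := φ) (C := C * |t| ^ (n+1))
      (fun y _ => (hgderiv y).hasDerivWithinAt)
      (fun y hy => by
        have h1 : |y| ≤ |t| := habs y hy
        have h2 : dist y 0 < δ := by rw [Real.dist_eq, sub_zero]; exact lt_of_le_of_lt h1 ht
        calc ‖φ y‖ ≤ C * ‖y ^ (n+1)‖ := hb h2
          _ = C * |y| ^ (n+1) := by rw [Real.norm_eq_abs, abs_pow]
          _ ≤ C * |t| ^ (n+1) := by
              exact mul_le_mul_of_nonneg_left (pow_le_pow_left₀ (abs_nonneg y) h1 _) hC.le)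
      (convex_uIcc (0:ℝ) t) Set.left_mem_uIcc Set.right_mem_uIcc
    have hkey : ‖g t‖ ≤ C * |t| ^ (n+1) * |t| := by
      simpa [hg0, Real.norm_eq_abs] using key
    calc ‖g t‖ ≤ C * |t| ^ (n+1) * |t| := hkey
      _ = C * ‖t ^ (n+1+1)‖ := by rw [Real.norm_eq_abs, abs_pow]; ring

/-- Degree-7 Taylor polynomial of `u` at `x`. -/
noncomputable def tP (u : ℝ → ℝ) (x : ℝ) : ℝ → ℝ := fun t =>
  u x + deriv u x * t + iteratedDeriv 2 u x / 2 * t ^ 2 + iteratedDeriv 3 u x / 6 * t ^ 3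
  + iteratedDeriv 4 u x / 24 * t ^ 4 + iteratedDeriv 5 u x / 120 * t ^ 5
  + iteratedDeriv 6 u x / 720 * t ^ 6 + iteratedDeriv 7 u x / 5040 * t ^ 7

/-- Taylor remainder of order 7. -/
noncomputable def tR (u : ℝ → ℝ) (x : ℝ) : ℝ → ℝ := fun t => u (x + t) - tP u x t

lemma tR_isBigO (u : ℝ → ℝ) (hu : ContDiff ℝ (⊤ : ℕ∞) u) (x : ℝ) :
    tR u x =O[𝓝 (0:ℝ)] fun t => t ^ 8 := by
  have h := taylor_isBigO 7 u hu x
  have he : (fun t : ℝ => u (x + t)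
      - ∑ i ∈ Finset.range (7+1), iteratedDeriv i u x / (Nat.factorial i : ℝ) * t ^ i)
      = tR u x := by
    funext t
    simp only [tR, tP, Finset.sum_range_succ, Finset.range_one, Finset.sum_singleton]
    simp [iteratedDeriv_zero, iteratedDeriv_one, Nat.factorial]
  rw [he] at h
  exact h

lemma tRk_isBigO (u : ℝ → ℝ) (hu : ContDiff ℝ (⊤ : ℕ∞) u) (x : ℝ) (k : ℝ) :
    (fun h : ℝ => tR u x (k * h)) =O[𝓝[≠] (0:ℝ)] fun h => h ^ 8 := by
  have tk : Tendsto (fun h : ℝ => k * h) (𝓝[≠] (0:ℝ)) (𝓝 (0:ℝ)) := by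
    have hc : Continuous fun h : ℝ => k * h := continuous_const.mul continuous_id
    have := (hc.tendsto 0).mono_left (nhdsWithin_le_nhds (s := {(0:ℝ)}ᶜ))
    simpa using this
  have h1 := (tR_isBigO u hu x).comp_tendsto tk
  have h2 : (fun h : ℝ => (k * h) ^ 8) = fun h : ℝ => k ^ 8 * h ^ 8 := by
    funext h; ring
  refine h1.trans ?_
  rw [Function.comp_def, h2]
  exact (isBigO_refl (fun h : ℝ => h ^ 8) _).const_mul_left _

lemma pow_isBigO_pow (m n : ℕ) (hmn : n ≤ m) :
    (fun h : ℝ => h ^ m) =O[𝓝[≠] (0:ℝ)] fun h : ℝ => h ^ n := by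
  rw [isBigO_iff]
  refine ⟨1, ?_⟩
  have h1 : ∀ᶠ h : ℝ in 𝓝[≠] (0:ℝ), |h| ≤ 1 := by
    apply eventually_nhdsWithin_of_eventually_nhds
    filter_upwards [Metric.closedBall_mem_nhds (0:ℝ) one_pos] with h hh
    simpa [Real.dist_eq] using hh
  filter_upwards [h1] with h hh
  rw [Real.norm_eq_abs, Real.norm_eq_abs, abs_pow, abs_pow, one_mul]
  exact pow_le_pow_of_le_one (abs_nonneg h) hh hmn

lemma inv_pow_isBigO (p k : ℕ) (hpk : p + 4 ≤ k) :
    (fun h : ℝ => (h ^ p)⁻¹ * h ^ k) =O[𝓝[≠] (0:ℝ)] fun h : ℝ => h ^ 4 := by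
  have heq : (fun h : ℝ => (h ^ p)⁻¹ * h ^ k) =ᶠ[𝓝[≠] (0:ℝ)] fun h => h ^ (k - p) := by
    filter_upwards [self_mem_nhdsWithin] with h hh
    have hh' : h ≠ 0 := hh
    have hpk' : p ≤ k := le_trans (Nat.le_add_right p 4) hpk
    rw [pow_sub₀ h hh' hpk']
    ring
  refine IsBigO.congr' ?_ heq.symm EventuallyEq.rfl
  exact pow_isBigO_pow (k - p) 4 (by omega)

set_option maxHeartbeats 2000000 in
/-- The 4th-order centered difference discretisation of the Kuramoto–Sivashinsky
right-hand side is fourth-order consistent. -/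
theorem centered_4th_order_consistent (α : ℝ) (u : ℝ → ℝ) (hu : ContDiff ℝ (⊤ : ℕ∞) u) (x : ℝ) :
    (fun h : ℝ =>
      (-(α / h) * (u x * cdel h (cmu h u) x
            - (1 / 6) * u x * cdel h (cdel h (cdel h (cmu h u))) x)
        - (α / h ^ 2) * (cdel h (cdel h u) x
            - (1 / 12) * cdel h (cdel h (cdel h (cdel h u))) x)
        - (4 / h ^ 4) * (cdel h (cdel h (cdel h (cdel h u))) x
            - (1 / 6) * cdel h (cdel h (cdel h (cdel h (cdel h (cdel h u))))) x))
      - (-(α * (u x * deriv u x + iteratedDeriv 2 u x)) - 4 * iteratedDeriv 4 u x))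
    =O[𝓝[≠] (0 : ℝ)] fun h => h ^ 4 := by
  have hu' : ContDiff ℝ (⊤ : ℕ∞) u := hu.of_le (by simp)
  have hRk := tRk_isBigO u hu' x
  -- the regrouped function
  set G : ℝ → ℝ := fun h =>
    (-(α * u x) * (h ^ 1)⁻¹) *
        ((1/12) * tR u x ((-2)*h) - (2/3) * tR u x ((-1)*h)
          + (2/3) * tR u x (1*h) - (1/12) * tR u x (2*h))
      + (-α * (h ^ 2)⁻¹) *
        ((-1/12) * tR u x ((-2)*h) + (4/3) * tR u x ((-1)*h) - (5/2) * tR u x (0*h)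
          + (4/3) * tR u x (1*h) - (1/12) * tR u x (2*h))
      + (-4 * (h ^ 4)⁻¹) *
        ((-1/6) * tR u x ((-3)*h) + 2 * tR u x ((-2)*h) - (13/2) * tR u x ((-1)*h)
          + (28/3) * tR u x (0*h) - (13/2) * tR u x (1*h) + 2 * tR u x (2*h)
          - (1/6) * tR u x (3*h))
      + (α * u x * iteratedDeriv 5 u x / 30 + α * iteratedDeriv 6 u x / 90) * h ^ 4
      + (α * u x * iteratedDeriv 7 u x / 252) * h ^ 6 with hGdef
  have hSA : (fun h : ℝ => (1/12) * tR u x ((-2)*h) - (2/3) * tR u x ((-1)*h)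
      + (2/3) * tR u x (1*h) - (1/12) * tR u x (2*h)) =O[𝓝[≠] (0:ℝ)] fun h => h ^ 8 :=
    ((((hRk (-2)).const_mul_left _).sub ((hRk (-1)).const_mul_left _)).add
      ((hRk 1).const_mul_left _)).sub ((hRk 2).const_mul_left _)
  have hSB : (fun h : ℝ => (-1/12) * tR u x ((-2)*h) + (4/3) * tR u x ((-1)*h)
      - (5/2) * tR u x (0*h) + (4/3) * tR u x (1*h) - (1/12) * tR u x (2*h))
      =O[𝓝[≠] (0:ℝ)] fun h => h ^ 8 :=
    (((((hRk (-2)).const_mul_left _).add ((hRk (-1)).const_mul_left _)).sub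
      ((hRk 0).const_mul_left _)).add ((hRk 1).const_mul_left _)).sub
      ((hRk 2).const_mul_left _)
  have hSC : (fun h : ℝ => (-1/6) * tR u x ((-3)*h) + 2 * tR u x ((-2)*h)
      - (13/2) * tR u x ((-1)*h) + (28/3) * tR u x (0*h) - (13/2) * tR u x (1*h)
      + 2 * tR u x (2*h) - (1/6) * tR u x (3*h)) =O[𝓝[≠] (0:ℝ)] fun h => h ^ 8 :=
    (((((((hRk (-3)).const_mul_left _).add ((hRk (-2)).const_mul_left _)).sub
      ((hRk (-1)).const_mul_left _)).add ((hRk 0).const_mul_left _)).sub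
      ((hRk 1).const_mul_left _)).add ((hRk 2).const_mul_left _)).sub
      ((hRk 3).const_mul_left _)
  have hc1 : (fun h : ℝ => -(α * u x) * (h ^ 1)⁻¹) =O[𝓝[≠] (0:ℝ)] fun h => (h ^ 1)⁻¹ :=
    (isBigO_refl (fun h : ℝ => (h ^ 1)⁻¹) _).const_mul_left _
  have hc2 : (fun h : ℝ => -α * (h ^ 2)⁻¹) =O[𝓝[≠] (0:ℝ)] fun h => (h ^ 2)⁻¹ :=
    (isBigO_refl (fun h : ℝ => (h ^ 2)⁻¹) _).const_mul_left _
  have hc3 : (fun h : ℝ => (-4 : ℝ) * (h ^ 4)⁻¹) =O[𝓝[≠] (0:ℝ)] fun h => (h ^ 4)⁻¹ :=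
    (isBigO_refl (fun h : ℝ => (h ^ 4)⁻¹) _).const_mul_left _
  have hT1 := (hc1.mul hSA).trans (inv_pow_isBigO 1 8 (by norm_num))
  have hT2 := (hc2.mul hSB).trans (inv_pow_isBigO 2 8 (by norm_num))
  have hT3 := (hc3.mul hSC).trans (inv_pow_isBigO 4 8 (by norm_num))
  have hT4 : (fun h : ℝ => (α * u x * iteratedDeriv 5 u x / 30
      + α * iteratedDeriv 6 u x / 90) * h ^ 4) =O[𝓝[≠] (0:ℝ)] fun h => h ^ 4 := by
    have := (isBigO_refl (fun h : ℝ => h ^ 4) (𝓝[≠] (0:ℝ))).const_mul_left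
      (α * u x * iteratedDeriv 5 u x / 30 + α * iteratedDeriv 6 u x / 90)
    simpa [mul_comm] using this
  have hT5 : (fun h : ℝ => (α * u x * iteratedDeriv 7 u x / 252) * h ^ 6)
      =O[𝓝[≠] (0:ℝ)] fun h => h ^ 4 := by
    have := (pow_isBigO_pow 6 4 (by norm_num)).const_mul_left
      (α * u x * iteratedDeriv 7 u x / 252)
    simpa [mul_comm] using this
  have hG : G =O[𝓝[≠] (0:ℝ)] fun h => h ^ 4 :=
    (((hT1.add hT2).add hT3).add hT4).add hT5
  have heq : (fun h : ℝ =>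
      (-(α / h) * (u x * cdel h (cmu h u) x
            - (1 / 6) * u x * cdel h (cdel h (cdel h (cmu h u))) x)
        - (α / h ^ 2) * (cdel h (cdel h u) x
            - (1 / 12) * cdel h (cdel h (cdel h (cdel h u))) x)
        - (4 / h ^ 4) * (cdel h (cdel h (cdel h (cdel h u))) x
            - (1 / 6) * cdel h (cdel h (cdel h (cdel h (cdel h (cdel h u))))) x))
      - (-(α * (u x * deriv u x + iteratedDeriv 2 u x)) - 4 * iteratedDeriv 4 u x))
      =ᶠ[𝓝[≠] (0:ℝ)] G := by
    filter_upwards [self_mem_nhdsWithin] with h hh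
    have hh' : h ≠ 0 := hh
    simp only [hGdef, cdel, cmu, tR, tP]
    field_simp
    ring_nf
  exact hG.congr' heq.symm EventuallyEq.rfl
end
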